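/- arXiv:1909.01292 — 3 statements merged into one kernel-verified Lean document; each statement's English description precedes it below -/
import Mathlib

section
/- Let n ≥ 2 be an integer and let M > 0, e > 0 be real numbers. Define p(r) = r^(n+1) − r^(n−1) + 2Mr − e^2. Then p has at most three distinct positive real roots. -/
open Set

/-- If between any two elements of `Z` there is an element of `Z'`, then
`Z.encard ≤ Z'.encard + 1`. -/
lemma sep_encard {Z Z' : Set ℝ}
    (h : ∀ a ∈ Z, ∀ b ∈ Z, a < b → ∃ c ∈ Z', a < c ∧ c < b) :
    Z.encard ≤ Z'.encard + 1 := by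
  by_contra hlt
  push_neg at hlt
  have hZ'fin : Z'.Finite := by
    rcases Set.finite_or_infinite Z' with h' | h'
    · exact h'
    · rw [h'.encard_eq] at hlt
      simp at hlt
  set k := hZ'fin.toFinset.card with hk
  have hZ'enc : Z'.encard = (k : ℕ∞) := hZ'fin.encard_eq_coe_toFinset_card
  have h2 : ((k + 2 : ℕ) : ℕ∞) ≤ Z.encard := by
    rw [hZ'enc] at hlt
    have := Order.add_one_le_of_lt hlt
    calc ((k + 2 : ℕ) : ℕ∞) = (k : ℕ∞) + 1 + 1 := by push_cast; ring
      _ ≤ Z.encard := this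
  obtain ⟨T, hTZ, hT⟩ := Set.exists_subset_encard_eq h2
  have hTfin : T.Finite := Set.finite_of_encard_eq_coe hT
  have hcard : hTfin.toFinset.card = k + 2 := by
    have := hTfin.encard_eq_coe_toFinset_card
    rw [hT] at this
    exact_mod_cast this.symm
  let E : Fin (k + 2) ≃o hTfin.toFinset := hTfin.toFinset.orderIsoOfFin hcard
  have hmemT : ∀ i : Fin (k + 2), ((E i : ℝ)) ∈ Z := by
    intro i
    apply hTZ
    exact hTfin.mem_toFinset.mp (E i).2
  have hEmono : StrictMono fun i : Fin (k + 2) => ((E i : ℝ)) := by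
    intro i j hij
    exact_mod_cast E.strictMono hij
  have hc : ∀ i : Fin (k + 1), ∃ c ∈ Z',
      ((E i.castSucc : ℝ)) < c ∧ c < ((E i.succ : ℝ)) := by
    intro i
    exact h _ (hmemT _) _ (hmemT _) (hEmono (Fin.castSucc_lt_succ : i.castSucc < i.succ))
  choose c hcZ hc1 hc2 using hc
  have hcinj : Function.Injective c := by
    have hcmono : StrictMono c := by
      intro i j hij
      calc c i < (E i.succ : ℝ) := hc2 i
        _ ≤ (E j.castSucc : ℝ) := by
            rcases eq_or_lt_of_le (Fin.succ_le_castSucc_iff.mpr hij) with h' | h'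
            · rw [h']
            · exact le_of_lt (hEmono h')
        _ < c j := hc1 j
    exact hcmono.injective
  have hsub : Finset.univ.image c ⊆ hZ'fin.toFinset := by
    intro x hx
    simp only [Finset.mem_image] at hx
    obtain ⟨i, _, rfl⟩ := hx
    simpa using hcZ i
  have := Finset.card_le_card hsub
  rw [Finset.card_image_of_injective _ hcinj, Finset.card_univ, Fintype.card_fin] at this
  omega

/-- The polynomial p(r) = r^(n+1) − r^(n−1) + 2Mr − e² has at most three
distinct positive real roots. -/
theorem at_most_three_positive_roots (n : ℕ) (hn : 2 ≤ n) (M e : ℝ)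
    (hM : 0 < M) (he : 0 < e) :
    Set.encard {r : ℝ | 0 < r ∧
      r ^ (n + 1) - r ^ (n - 1) + 2 * M * r - e ^ 2 = 0} ≤ 3 := by
  set f : ℝ → ℝ := fun r => r ^ (n + 1) - r ^ (n - 1) + 2 * M * r - e ^ 2 with hf
  set f1 : ℝ → ℝ := fun r => (n + 1 : ℝ) * r ^ n - (n - 1 : ℕ) * r ^ (n - 2) + 2 * M with hf1
  set f2 : ℝ → ℝ := fun r => ((n + 1 : ℕ) * n : ℝ) * r ^ (n - 1)
      - ((n - 1) * (n - 2) : ℕ) * r ^ (n - 3) with hf2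
  have hder1 : ∀ x : ℝ, HasDerivAt f (f1 x) x := by
    intro x
    have h1 : HasDerivAt (fun r : ℝ => r ^ (n + 1)) ((n + 1 : ℝ) * x ^ n) x := by
      simpa using hasDerivAt_pow (n + 1) x
    have h2 : HasDerivAt (fun r : ℝ => r ^ (n - 1)) (((n - 1 : ℕ) : ℝ) * x ^ (n - 2)) x := by
      have := hasDerivAt_pow (n - 1) x
      have hnn : n - 1 - 1 = n - 2 := by omega
      rwa [hnn] at this
    have h3 : HasDerivAt (fun r : ℝ => 2 * M * r) (2 * M) x := by
      simpa using (hasDerivAt_id x).const_mul (2 * M)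
    have := ((h1.sub h2).add h3).sub_const (e ^ 2)
    convert this using 1
    all_goals rfl
  have hder2 : ∀ x : ℝ, HasDerivAt f1 (f2 x) x := by
    intro x
    have h1 : HasDerivAt (fun r : ℝ => (n + 1 : ℝ) * r ^ n)
        ((n + 1 : ℝ) * ((n : ℝ) * x ^ (n - 1))) x := (hasDerivAt_pow n x).const_mul _
    have h2 : HasDerivAt (fun r : ℝ => ((n - 1 : ℕ) : ℝ) * r ^ (n - 2))
        (((n - 1 : ℕ) : ℝ) * (((n - 2 : ℕ) : ℝ) * x ^ (n - 3))) x := by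
      have := (hasDerivAt_pow (n - 2) x).const_mul ((n - 1 : ℕ) : ℝ)
      have hnn : n - 2 - 1 = n - 3 := by omega
      rwa [hnn] at this
    have := (h1.sub h2).add_const (2 * M)
    refine this.congr_deriv ?_
    simp only [hf2]
    push_cast
    ring
  have hcont : Continuous f := by
    have : Differentiable ℝ f := fun x => (hder1 x).differentiableAt
    exact this.continuous
  have hcont1 : Continuous f1 := by
    have : Differentiable ℝ f1 := fun x => (hder2 x).differentiableAt
    exact this.continuous
  -- Step 1: positive roots of f2 : at most one
  have hS2 : {r : ℝ | 0 < r ∧ f2 r = 0}.encard ≤ 1 := by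
    rw [Set.encard_le_one_iff]
    rintro a b ⟨ha, ha0⟩ ⟨hb, hb0⟩
    simp only [hf2] at ha0 hb0
    rcases eq_or_lt_of_le hn with h2 | h3
    · -- n = 2 : f2 r = 6 r, only root 0
      exfalso
      rw [← h2] at ha0
      norm_num at ha0
      exact absurd ha0 (ne_of_gt ha)
    · have hn3 : 3 ≤ n := h3
      have key : ∀ x : ℝ, 0 < x →
          ((n + 1 : ℕ) * n : ℝ) * x ^ (n - 1) - ((n - 1) * (n - 2) : ℕ) * x ^ (n - 3) = 0 →
          ((n + 1 : ℕ) * n : ℝ) * x ^ 2 = ((n - 1) * (n - 2) : ℕ) := by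
        intro x hx hx0
        have hpow : x ^ (n - 1) = x ^ (n - 3) * x ^ 2 := by
          rw [← pow_add]
          congr 1
          omega
        rw [hpow, sub_eq_zero] at hx0
        have hxne : x ^ (n - 3) ≠ 0 := pow_ne_zero _ (ne_of_gt hx)
        field_simp at hx0 ⊢
        nlinarith [pow_pos hx (n - 3), hx0]
      have hA := key a ha ha0
      have hB := key b hb hb0
      have hcoef : (0 : ℝ) < ((n + 1 : ℕ) * n : ℝ) := by positivity
      have hab : a ^ 2 = b ^ 2 := by
        have := hA.trans hB.symm
        exact mul_left_cancel₀ (ne_of_gt hcoef) this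
      nlinarith [hab, ha, hb]
  -- Step 2: Rolle between roots
  have hsep1 : ∀ a ∈ {r : ℝ | 0 < r ∧ f r = 0}, ∀ b ∈ {r : ℝ | 0 < r ∧ f r = 0},
      a < b → ∃ c ∈ {r : ℝ | 0 < r ∧ f1 r = 0}, a < c ∧ c < b := by
    rintro a ⟨ha, ha0⟩ b ⟨hb, hb0⟩ hab
    obtain ⟨c, hc, hc0⟩ := exists_hasDerivAt_eq_zero hab hcont.continuousOn
      (ha0.trans hb0.symm) (fun x _ => hder1 x)
    exact ⟨c, ⟨ha.trans hc.1, hc0⟩, hc.1, hc.2⟩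
  have hsep2 : ∀ a ∈ {r : ℝ | 0 < r ∧ f1 r = 0}, ∀ b ∈ {r : ℝ | 0 < r ∧ f1 r = 0},
      a < b → ∃ c ∈ {r : ℝ | 0 < r ∧ f2 r = 0}, a < c ∧ c < b := by
    rintro a ⟨ha, ha0⟩ b ⟨hb, hb0⟩ hab
    obtain ⟨c, hc, hc0⟩ := exists_hasDerivAt_eq_zero hab hcont1.continuousOn
      (ha0.trans hb0.symm) (fun x _ => hder2 x)
    exact ⟨c, ⟨ha.trans hc.1, hc0⟩, hc.1, hc.2⟩
  have h1 := sep_encard hsep1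
  have h2 := sep_encard hsep2
  calc {r : ℝ | 0 < r ∧ f r = 0}.encard
      ≤ {r : ℝ | 0 < r ∧ f1 r = 0}.encard + 1 := h1
    _ ≤ ({r : ℝ | 0 < r ∧ f2 r = 0}.encard + 1) + 1 := by
        exact add_le_add_left h2 1
    _ ≤ ((1 + 1) + 1 : ℕ∞) := by
        exact add_le_add_left (add_le_add_left hS2 1) 1
    _ = 3 := by norm_num
end

section
/- Let n ≥ 2, M > 0, e > 0, and define V(r) = r^2 + 2M/r^(n−2) − e^2/r^(n−1) − 1 for r > 0. Suppose p(r) = r^(n−1) V(r) has exactly three positive roots r_− < r_+ < r_c (the subextremality assumption) and V''(r_c) > 0. Then V'(r) > 0 for all r ≥ r_c (global redshift). -/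
open Set

/-- The Reissner–Nordström–de Sitter potential V(r) = r² + 2M/r^(n−2) − e²/r^(n−1) − 1. -/
noncomputable def Vfun (n : ℕ) (M e : ℝ) : ℝ → ℝ :=
  fun r => r ^ 2 + 2 * M / r ^ (n - 2) - e ^ 2 / r ^ (n - 1) - 1

lemma Vfun_hasDerivAt (m : ℕ) (M e r : ℝ) (hr : 0 < r) :
    HasDerivAt (Vfun (m + 2) M e)
      ((2 * r ^ (m + 3) - 2 * M * m * r + (m + 1) * e ^ 2) / r ^ (m + 2)) r := by
  have hrm : r ^ m ≠ 0 := pow_ne_zero _ hr.ne'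
  have hrm1 : r ^ (m + 1) ≠ 0 := pow_ne_zero _ hr.ne'
  have h : HasDerivAt (Vfun (m + 2) M e)
      ((↑(2:ℕ) * r ^ (2 - 1)) +
        ((0 * r ^ m - 2 * M * (↑m * r ^ (m - 1))) / (r ^ m) ^ 2) -
        ((0 * r ^ (m + 1) - e ^ 2 * ((↑(m + 1)) * r ^ (m + 1 - 1))) / (r ^ (m + 1)) ^ 2)) r := by
    unfold Vfun
    simp only [show m + 2 - 2 = m from rfl, show m + 2 - 1 = m + 1 from rfl]
    exact (((hasDerivAt_pow 2 r).add
      (((hasDerivAt_const r (2 * M)).div (hasDerivAt_pow m r) hrm))).sub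
      ((hasDerivAt_const r (e ^ 2)).div (hasDerivAt_pow (m + 1) r) hrm1)).sub_const 1
  convert h using 1
  simp only [show m + 1 - 1 = m from rfl, pow_one]
  rcases m with _ | k
  · push_cast
    field_simp
    ring
  · have hk : r ^ k ≠ 0 := pow_ne_zero _ hr.ne'
    simp only [Nat.add_sub_cancel]
    push_cast
    field_simp
    ring

/-- Global redshift: under subextremality (exactly three positive roots
r_− < r_+ < r_c of p(r) = r^(n−1) V(r)) and V''(r_c) > 0, one has V'(r) > 0
for all r ≥ r_c. -/
theorem global_redshift (n : ℕ) (hn : 2 ≤ n) (M e : ℝ) (hM : 0 < M) (he : 0 < e)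
    (rm rp rc : ℝ) (h0 : 0 < rm) (h1 : rm < rp) (h2 : rp < rc)
    (hroots : {r : ℝ | 0 < r ∧ r ^ (n - 1) * Vfun n M e r = 0} = {rm, rp, rc})
    (hV'' : 0 < deriv (deriv (Vfun n M e)) rc) :
    ∀ r : ℝ, rc ≤ r → 0 < deriv (Vfun n M e) r := by
  obtain ⟨m, rfl⟩ : ∃ m, n = m + 2 := ⟨n - 2, by omega⟩
  set V := Vfun (m + 2) M e with hV
  -- roots of V
  have hroot : ∀ x ∈ ({rm, rp, rc} : Set ℝ), V x = 0 := by
    intro x hx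
    have : x ∈ {r : ℝ | 0 < r ∧ r ^ (m + 2 - 1) * V r = 0} := hroots ▸ hx
    obtain ⟨hxpos, hx0⟩ := this
    rcases mul_eq_zero.1 hx0 with h | h
    · exact absurd h (pow_ne_zero _ hxpos.ne')
    · exact h
  have hVm : V rm = 0 := hroot rm (by simp)
  have hVp : V rp = 0 := hroot rp (by simp)
  have hVc : V rc = 0 := hroot rc (by simp)
  -- differentiability / continuity on (0, ∞)
  have hdiff : ∀ x : ℝ, 0 < x → DifferentiableAt ℝ V x := fun x hx =>
    (Vfun_hasDerivAt m M e x hx).differentiableAt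
  have hcont : ∀ a b : ℝ, 0 < a → ContinuousOn V (Icc a b) := by
    intro a b ha
    exact fun x hx => ((hdiff x (lt_of_lt_of_le ha hx.1)).continuousAt).continuousWithinAt
  -- Rolle twice
  obtain ⟨x1, hx1, hdx1⟩ := exists_deriv_eq_zero h1 (hcont _ _ h0) (hVm.trans hVp.symm)
  obtain ⟨x2, hx2, hdx2⟩ := exists_deriv_eq_zero h2 (hcont _ _ (h0.trans h1)) (hVp.trans hVc.symm)
  have hx1pos : 0 < x1 := h0.trans hx1.1
  have hx2pos : 0 < x2 := (h0.trans h1).trans hx2.1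
  -- q
  set q : ℝ → ℝ := fun x => 2 * x ^ (m + 3) - 2 * M * m * x + (m + 1) * e ^ 2 with hq
  have hderivV : ∀ x : ℝ, 0 < x → deriv V x = q x / x ^ (m + 2) := fun x hx =>
    (Vfun_hasDerivAt m M e x hx).deriv
  have hq1 : q x1 = 0 := by
    have := hderivV x1 hx1pos
    rw [hdx1] at this
    field_simp at this
    linarith [this]
  have hq2 : q x2 = 0 := by
    have := hderivV x2 hx2pos
    rw [hdx2] at this
    field_simp at this
    linarith [this]
  -- q is strictly convex on [0, ∞)
  have hq'at : ∀ x : ℝ, HasDerivAt q (2 * (m + 3) * x ^ (m + 2) - 2 * M * m) x := by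
    intro x
    have h1' : HasDerivAt (fun x : ℝ => 2 * x ^ (m + 3)) (2 * (↑(m + 3) * x ^ (m + 3 - 1))) x :=
      (hasDerivAt_pow (m + 3) x).const_mul 2
    have h2' : HasDerivAt (fun x : ℝ => 2 * M * m * x) (2 * M * m) x := by
      simpa using (hasDerivAt_id x).const_mul (2 * M * (m : ℝ))
    have h3 := (h1'.sub h2').add_const ((m + 1 : ℝ) * e ^ 2)
    refine h3.congr_deriv ?_
    simp only [show m + 3 - 1 = m + 2 from rfl]
    push_cast
    ring
  have hdq : deriv q = fun x => 2 * (m + 3) * x ^ (m + 2) - 2 * M * m :=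
    funext fun x => (hq'at x).deriv
  have hq''at : ∀ x : ℝ, HasDerivAt (deriv q) (2 * (m + 3) * ((m + 2) * x ^ (m + 1))) x := by
    intro x
    rw [hdq]
    simpa using ((hasDerivAt_pow (m + 2) x).const_mul (2 * ((m : ℝ) + 3))).sub_const (2 * M * m)
  have hconv : StrictConvexOn ℝ (Ici (0 : ℝ)) q := by
    apply strictConvexOn_of_deriv2_pos (convex_Ici 0)
    · exact fun x _ => ((hq'at x).differentiableAt.continuousAt).continuousWithinAt
    · intro x hx
      rw [interior_Ici] at hx
      have : deriv^[2] q x = 2 * (m + 3) * ((m + 2) * x ^ (m + 1)) := (hq''at x).deriv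
      rw [this]
      exact mul_pos (by positivity) (mul_pos (by positivity) (pow_pos hx _))
  -- conclude q r > 0 for r > x2
  have hqpos : ∀ r : ℝ, x2 < r → 0 < q r := by
    intro r hr
    have hx12 : x1 < x2 := hx1.2.trans hx2.1
    have hx1r : x1 < r := hx12.trans hr
    have ha : 0 < (r - x2) / (r - x1) := div_pos (by linarith) (by linarith)
    have hb : 0 < (x2 - x1) / (r - x1) := div_pos (by linarith) (by linarith)
    have hne : r - x1 ≠ 0 := by linarith
    have hab : (r - x2) / (r - x1) + (x2 - x1) / (r - x1) = 1 := by
      rw [← add_div, div_eq_one_iff_eq hne]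
      ring
    have hcomb : ((r - x2) / (r - x1)) • x1 + ((x2 - x1) / (r - x1)) • r = x2 := by
      simp only [smul_eq_mul]
      rw [div_mul_eq_mul_div, div_mul_eq_mul_div, ← add_div, div_eq_iff hne]
      ring
    have := hconv.2 (le_of_lt hx1pos) (le_of_lt (hx1pos.trans hx1r))
      (ne_of_lt hx1r) ha hb hab
    rw [hcomb, hq2, hq1, smul_eq_mul, smul_eq_mul, mul_zero, zero_add] at this
    have h4 := div_pos this hb
    rwa [mul_div_cancel_left₀ _ hb.ne'] at h4
  intro r hr
  have hrpos : 0 < r := (h0.trans (h1.trans h2)).trans_le hr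
  rw [hderivV r hrpos]
  exact div_pos (hqpos r (hx2.2.trans_le hr)) (pow_pos hrpos _)
end

section
/- Let n > 2, m ∈ ℝ with |m| > n/2, and set δ = m² − n²/4 > 0. Let V(r) = r^2 + 2M/r^(n−2) − e^2/r^(n−1) − 1 with M > 0, e ≥ 0, and define θ(r) = −(n/2)(n/2 − 1)/r² + m²/V(r) + (n/(2r))(1/r − V'(r)/V(r)). Then there exists r_0 such that θ(r) > 0 for all r ≥ r_0. -/
/-!
Since `V(r) ~ r²` and `V'(r) ~ 2r`, the rescaled quantity `r² θ(r)` tends to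
`-(n/2)(n/2 - 1) + m² + (n/2)(1 - 2) = m² - n²/4 = δ > 0`, so `θ(r) > 0` for large `r`.
-/

open Filter Topology

lemma hasDerivAt_const_div_pow {𝕜 : Type*} [NontriviallyNormedField 𝕜] (c : 𝕜) (p : ℕ)
    {x : 𝕜} (hx : x ≠ 0) :
    HasDerivAt (fun y => c / y ^ p) (-(c * p) / x ^ (p + 1)) x := by
  refine ((hasDerivAt_const x c).div (hasDerivAt_pow p x) (pow_ne_zero p hx)).congr_deriv ?_
  rcases p with _ | p
  · simp
  · rw [Nat.add_sub_cancel]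
    field_simp
    ring

lemma tendsto_const_div_pow_atTop (c : ℝ) {p : ℕ} (hp : p ≠ 0) :
    Tendsto (fun r : ℝ => c / r ^ p) atTop (𝓝 0) :=
  tendsto_const_nhds.div_atTop (tendsto_pow_atTop hp)

lemma hasDerivAt_Vfun (n : ℕ) (M e : ℝ) {r : ℝ} (hr : r ≠ 0) :
    HasDerivAt (Vfun n M e)
      (2 * r - 2 * M * (n - 2 : ℕ) / r ^ (n - 2 + 1) + e ^ 2 * (n - 1 : ℕ) / r ^ (n - 1 + 1))
      r :=
  ((((hasDerivAt_pow 2 r).add (hasDerivAt_const_div_pow (2 * M) (n - 2) hr)).sub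
    (hasDerivAt_const_div_pow (e ^ 2) (n - 1) hr)).sub_const 1).congr_deriv (by ring)

lemma tendsto_Vfun_div_sq (n : ℕ) (M e : ℝ) :
    Tendsto (fun r => Vfun n M e r / r ^ 2) atTop (𝓝 1) := by
  have h := ((tendsto_const_nhds (x := (1 : ℝ)).add
    (tendsto_const_div_pow_atTop (2 * M) (p := n - 2 + 2) (by omega))).sub
    (tendsto_const_div_pow_atTop (e ^ 2) (p := n - 1 + 2) (by omega))).sub
    (tendsto_const_div_pow_atTop 1 (p := 2) (by omega))
  rw [add_zero, sub_zero, sub_zero] at h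
  refine h.congr' ?_
  filter_upwards [eventually_ne_atTop 0] with r hr
  simp only [Vfun]
  field_simp
  ring

lemma tendsto_deriv_Vfun_div (n : ℕ) (M e : ℝ) :
    Tendsto (fun r => deriv (Vfun n M e) r / r) atTop (𝓝 2) := by
  have h := (tendsto_const_nhds (x := (2 : ℝ)).sub
    (tendsto_const_div_pow_atTop (2 * M * (n - 2 : ℕ)) (p := n - 2 + 2) (by omega))).add
    (tendsto_const_div_pow_atTop (e ^ 2 * (n - 1 : ℕ)) (p := n - 1 + 2) (by omega))
  rw [sub_zero, add_zero] at h
  refine h.congr' ?_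
  filter_upwards [eventually_ne_atTop 0] with r hr
  rw [(hasDerivAt_Vfun n M e hr).deriv]
  field_simp
  ring

theorem eventually_pos_of_tendsto_div_sq {V D : ℝ → ℝ} {a m : ℝ} (ham : a ^ 2 < m ^ 2)
    (hV : Tendsto (fun r => V r / r ^ 2) atTop (𝓝 1))
    (hD : Tendsto (fun r => D r / r) atTop (𝓝 2)) :
    ∀ᶠ r in atTop, 0 < -a * (a - 1) / r ^ 2 + m ^ 2 / V r + a / r * (1 / r - D r / V r) := by
  have hVinv : Tendsto (fun r => (V r / r ^ 2)⁻¹) atTop (𝓝 1) := by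
    simpa using hV.inv₀ one_ne_zero
  have hlim : Tendsto (fun r => -a * (a - 1) + m ^ 2 * (V r / r ^ 2)⁻¹
      + a * (1 - D r / r * (V r / r ^ 2)⁻¹)) atTop (𝓝 (m ^ 2 - a ^ 2)) := by
    convert (tendsto_const_nhds.add (hVinv.const_mul _)).add
      ((tendsto_const_nhds.sub (hD.mul hVinv)).const_mul a) using 2
    ring
  filter_upwards [hlim.eventually (lt_mem_nhds (sub_pos.2 ham)), hV.eventually_ne one_ne_zero,
    eventually_gt_atTop 0] with r hpos hVr hr
  have hV0 : V r ≠ 0 := fun h => hVr (by simp [h])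
  have hscale : -a * (a - 1) / r ^ 2 + m ^ 2 / V r + a / r * (1 / r - D r / V r)
      = (-a * (a - 1) + m ^ 2 * (V r / r ^ 2)⁻¹
          + a * (1 - D r / r * (V r / r ^ 2)⁻¹)) / r ^ 2 := by
    field_simp
  rw [hscale]
  positivity

theorem theta_eventually_positive_general (n : ℕ) (m M e : ℝ)
    (hm : (n : ℝ) ^ 2 / 4 < m ^ 2) :
    ∃ r0 : ℝ, ∀ r : ℝ, r0 ≤ r →
      0 < -((n : ℝ) / 2) * ((n : ℝ) / 2 - 1) / r ^ 2
          + m ^ 2 / Vfun n M e r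
          + ((n : ℝ) / (2 * r)) * (1 / r - deriv (Vfun n M e) r / Vfun n M e r) := by
  have hnm : ((n : ℝ) / 2) ^ 2 < m ^ 2 := by linarith [div_pow (n : ℝ) 2 2]
  have h := eventually_pos_of_tendsto_div_sq hnm (tendsto_Vfun_div_sq n M e)
    (tendsto_deriv_Vfun_div n M e)
  simp only [div_div] at h
  exact eventually_atTop.mp h

/-- If m² > n²/4 then
θ(r) = −(n/2)(n/2−1)/r² + m²/V(r) + (n/(2r))(1/r − V'(r)/V(r)) is eventually
positive. -/
theorem theta_eventually_positive (n : ℕ) (hn : 2 < n) (m M e : ℝ)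
    (hm : (n : ℝ) ^ 2 / 4 < m ^ 2) (hM : 0 < M) (he : 0 ≤ e) :
    ∃ r0 : ℝ, ∀ r : ℝ, r0 ≤ r →
      0 < -((n : ℝ) / 2) * ((n : ℝ) / 2 - 1) / r ^ 2
          + m ^ 2 / Vfun n M e r
          + ((n : ℝ) / (2 * r)) * (1 / r - deriv (Vfun n M e) r / Vfun n M e r) :=
  theta_eventually_positive_general n m M e hm
end
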